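/- Let u be a unitary element of M = M_n(L) with entries u_{ij} ∈ L, and let w be a unitary element of M_n(ℂ). Let u' = (w* ⊗ 1_L) u (w ⊗ 1_L), i.e. the element of M whose entries are the entries of u expressed with respect to the conjugated matrix units w e_{ij} w*. Then S(ρ[U(u')]) = S(ρ[U(u)]); in particular, the entropy S(ρ[U(u)]) does not depend on the choice of matrix units of M_n(ℂ). -/

import Mathlib

/-! Each entry of `(w* ⊗ 1) u (w ⊗ 1)` is a linear combination of the entries of `u`, with
coefficients from the unitary `V = w* ⊗ wᵀ`; by sesquilinearity of `(x, y) ↦ τ(y* x)` this gives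
`ρ[U(u')] = V ρ[U(u)] V*`. Unitary conjugation preserves the characteristic polynomial, hence the
eigenvalues of a Hermitian matrix, hence the entropy. -/

open Matrix ComplexOrder

/-- The embedding `a ↦ a ⊗ 1_L` of `M_n(ℂ)` into `M_n(L)`. -/
noncomputable def incl (n : ℕ) {L : Type*} [Ring L] [Algebra ℂ L]
    (a : Matrix (Fin n) (Fin n) ℂ) : Matrix (Fin n) (Fin n) L :=
  a.map (algebraMap ℂ L)

/-- The `n²×n²` density matrix `ρ[U(v)]` associated to the operational partition
`U(v) = (v_{ij}/√n)_{i,j}` induced by `v`: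
its `((i,j),(k,l))` entry is `(1/n)·τ_L(v_{kl}* v_{ij})`. -/
noncomputable def rhoU (n : ℕ) {L : Type*} [Ring L] [StarRing L] [Algebra ℂ L]
    (τ : L →ₗ[ℂ] ℂ) (v : Matrix (Fin n) (Fin n) L) :
    Matrix (Fin n × Fin n) (Fin n × Fin n) ℂ :=
  Matrix.of fun p q : Fin n × Fin n =>
    (n : ℂ)⁻¹ * τ (star (v q.1 q.2) * v p.1 p.2)

/-- The von Neumann entropy `S(ρ) = Σ_i η(λ_i)` of a Hermitian matrix `ρ`, where
`λ_i` are the eigenvalues of `ρ` (with multiplicity) and `η(t) = -t log t`. -/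
noncomputable def vnEntropy {k : Type*} [Fintype k] [DecidableEq k]
    (ρ : Matrix k k ℂ) (hρ : ρ.IsHermitian) : ℝ :=
  ∑ i, Real.negMulLog (hρ.eigenvalues i)

open Kronecker

theorem Matrix.charpoly_mul_mul_of_mul_eq_one {k R : Type*} [Fintype k] [DecidableEq k]
    [CommRing R] {V W : Matrix k k R} (A : Matrix k k R) (hWV : W * V = 1) :
    (V * A * W).charpoly = A.charpoly := by
  rw [charpoly_mul_comm, ← mul_assoc, hWV, one_mul]

theorem vnEntropy_eq_of_charpoly_eq {k : Type*} [Fintype k] [DecidableEq k]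
    {A B : Matrix k k ℂ} (hA : A.IsHermitian) (hB : B.IsHermitian)
    (h : A.charpoly = B.charpoly) : vnEntropy A hA = vnEntropy B hB := by
  rw [vnEntropy, vnEntropy, (hA.eigenvalues_eq_eigenvalues_iff hB).2 h]

theorem Matrix.conjTranspose_kronecker_transpose_mul_self {k R : Type*} [Fintype k]
    [DecidableEq k] [CommRing R] [StarRing R] {w : Matrix k k R} (hw : w * star w = 1) :
    (wᴴ ⊗ₖ wᵀ)ᴴ * (wᴴ ⊗ₖ wᵀ) = 1 := by
  rw [conjTranspose_kronecker, ← mul_kronecker_mul, conjTranspose_conjTranspose,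
    conjTranspose_transpose_eq_transpose_conjTranspose, ← transpose_mul,
    ← star_eq_conjTranspose, hw, transpose_one, one_kronecker_one]

section

variable {n : ℕ} {L : Type*} [Ring L] [Algebra ℂ L]

theorem incl_mul_mul_incl_apply (a b : Matrix (Fin n) (Fin n) ℂ)
    (u : Matrix (Fin n) (Fin n) L) (i j : Fin n) :
    (incl n a * u * incl n b : Matrix (Fin n) (Fin n) L) i j =
      ∑ r : Fin n × Fin n, (a ⊗ₖ bᵀ) (i, j) r • u r.1 r.2 := by
  simp only [mul_apply, incl, map_apply, Finset.sum_mul, Fintype.sum_prod_type,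
    kroneckerMap_apply, transpose_apply]
  rw [Finset.sum_comm]
  refine Finset.sum_congr rfl fun c _ => Finset.sum_congr rfl fun d _ => ?_
  rw [mul_assoc, ← Algebra.commutes (b d j), ← mul_assoc, ← _root_.map_mul, ← Algebra.smul_def]

variable [StarRing L] [StarModule ℂ L]

theorem rhoU_eq_mul_mul_conjTranspose (τ : L →ₗ[ℂ] ℂ) {v v' : Matrix (Fin n) (Fin n) L}
    (A : Matrix (Fin n × Fin n) (Fin n × Fin n) ℂ)
    (h : ∀ p : Fin n × Fin n, v' p.1 p.2 = ∑ r, A p r • v r.1 r.2) :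
    rhoU n τ v' = A * rhoU n τ v * Aᴴ := by
  ext p q
  simp only [rhoU, of_apply, h, mul_apply, conjTranspose_apply, star_sum, star_smul,
    Finset.sum_mul, Finset.mul_sum, smul_mul_smul_comm, map_sum, map_smul, smul_eq_mul]
  rw [Finset.sum_comm]
  refine Finset.sum_congr rfl fun r _ => Finset.sum_congr rfl fun s _ => ?_
  simp only [Complex.star_def]
  ring

end

theorem entropy_invariant_under_change_of_matrix_units_general
    {n : ℕ} {L : Type*} [Ring L] [StarRing L] [Algebra ℂ L] [StarModule ℂ L]
    (τ : L →ₗ[ℂ] ℂ)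
    (u : Matrix (Fin n) (Fin n) L)
    (w : Matrix (Fin n) (Fin n) ℂ)
    (hw' : w * star w = 1)
    (h₁ : (rhoU n τ (incl n (star w) * u * incl n w)).IsHermitian)
    (h₂ : (rhoU n τ u).IsHermitian) :
    vnEntropy (rhoU n τ (incl n (star w) * u * incl n w)) h₁ =
      vnEntropy (rhoU n τ u) h₂ := by
  have hρ : rhoU n τ (incl n (star w) * u * incl n w) =
      (wᴴ ⊗ₖ wᵀ) * rhoU n τ u * (wᴴ ⊗ₖ wᵀ)ᴴ :=
    rhoU_eq_mul_mul_conjTranspose τ _ fun p => incl_mul_mul_incl_apply _ _ u p.1 p.2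
  refine vnEntropy_eq_of_charpoly_eq h₁ h₂ ?_
  rw [hρ]
  exact charpoly_mul_mul_of_mul_eq_one _ (conjTranspose_kronecker_transpose_mul_self hw')

/-- Let `u` be a unitary of `M = M_n(L)`, `w` a unitary of `M_n(ℂ)`, and
`u' = (w* ⊗ 1_L) u (w ⊗ 1_L)` (the element whose entries are the entries of `u` with
respect to the conjugated matrix units `w e_{ij} w*`). Then
`S(ρ[U(u')]) = S(ρ[U(u)])`: the entropy does not depend on the choice of matrix
units of `M_n(ℂ)`. -/
theorem entropy_invariant_under_change_of_matrix_units
    {n : ℕ} {L : Type*} [Ring L] [StarRing L] [Algebra ℂ L] [StarModule ℂ L]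
    [FiniteDimensional ℂ L]
    (τ : L →ₗ[ℂ] ℂ)
    (hτ1 : τ 1 = 1)
    (hτtr : ∀ x y : L, τ (x * y) = τ (y * x))
    (hτstar : ∀ x : L, τ (star x) = starRingEnd ℂ (τ x))
    (hτpos : ∀ x : L, 0 ≤ τ (star x * x))
    (hτfaithful : ∀ x : L, τ (star x * x) = 0 → x = 0)
    (u : Matrix (Fin n) (Fin n) L)
    (hu : star u * u = 1) (hu' : u * star u = 1)
    (w : Matrix (Fin n) (Fin n) ℂ)
    (hw : star w * w = 1) (hw' : w * star w = 1)
    (h₁ : (rhoU n τ (incl n (star w) * u * incl n w)).IsHermitian)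
    (h₂ : (rhoU n τ u).IsHermitian) :
    vnEntropy (rhoU n τ (incl n (star w) * u * incl n w)) h₁ =
      vnEntropy (rhoU n τ u) h₂ :=
  entropy_invariant_under_change_of_matrix_units_general τ u w hw' h₁ h₂
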